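/- arXiv:2002.03356 — 9 statements merged into one kernel-verified Lean document; each statement's English description precedes it below -/
import Mathlib

section
/- Let (Ω, 𝔄, ℙ) be a probability space, 𝔰₁, …, 𝔰_n events, 𝔱 an event with ℙ(𝔱) > 0, and let α, β be finite collections of nonempty subsets of {1,…,n} with α ⪯ β (i.e., for every 𝐛 ∈ β there exists 𝐚 ∈ α with 𝐚 ⊆ 𝐛). Write E(α) := ⋃_{𝐚∈α} ⋂_{i∈𝐚} 𝔰_i and assume ℙ(𝔱 ∩ E(β)) > 0. Then the informative and misinformative shared information increase monotonically along the redundancy lattice: log₂(1/ℙ(E(α))) ≤ log₂(1/ℙ(E(β))) and log₂(ℙ(𝔱)/ℙ(𝔱 ∩ E(α))) ≤ log₂(ℙ(𝔱)/ℙ(𝔱 ∩ E(β))). -/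
/-! If every `b ∈ β` contains some `a ∈ α`, then `⋂ i ∈ b, s i ⊆ ⋂ i ∈ a, s i`, so going up the
redundancy lattice shrinks the event: `E(β) ⊆ E(α)`, hence also `t ∩ E(β) ⊆ t ∩ E(α)`. Both shared
informations have the form `log (c / ℙ E)` with `c ≥ 0`, which is antitone in `ℙ E` as long as the
smaller event has positive probability; `ℙ (t ∩ E(β)) > 0` provides this for both. -/

open MeasureTheory Real

theorem Real.logb_div_le_logb_div_of_le {b c x y : ℝ} (hb : 1 < b) (hc : 0 ≤ c)
    (hx : 0 < x) (hxy : x ≤ y) : logb b (c / y) ≤ logb b (c / x) := by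
  rcases hc.eq_or_lt with rfl | hc
  · simp -- both sides are the junk value `logb b 0 = 0`
  · exact logb_le_logb_of_le hb (div_pos hc (hx.trans_le hxy))
      (div_le_div_of_nonneg_left hc.le hx hxy)

theorem MeasureTheory.logb_div_measureReal_le_of_subset {Ω : Type*} [MeasurableSpace Ω]
    {μ : Measure Ω} [IsFiniteMeasure μ] {A B : Set Ω} {b c : ℝ} (hb : 1 < b) (hc : 0 ≤ c)
    (hAB : A ⊆ B) (hA : 0 < μ A) : logb b (c / μ.real B) ≤ logb b (c / μ.real A) :=
  logb_div_le_logb_div_of_le hb hc (ENNReal.toReal_pos hA.ne' (measure_ne_top μ A))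
    (measureReal_mono hAB)

theorem Set.biUnion_biInter_subset_of_forall_exists_subset {Ω ι : Type*} (s : ι → Set Ω)
    {α β : Finset (Finset ι)} (hord : ∀ b ∈ β, ∃ a ∈ α, a ⊆ b) :
    ⋃ b ∈ β, ⋂ i ∈ b, s i ⊆ ⋃ a ∈ α, ⋂ i ∈ a, s i := by
  refine Set.iUnion₂_subset fun b hb => ?_
  obtain ⟨a, ha, hab⟩ := hord b hb
  exact Set.subset_iUnion₂_of_subset a ha (Set.biInter_subset_biInter_left hab)

theorem shared_info_monotone_on_redundancy_lattice_general
    {Ω : Type*} [MeasurableSpace Ω] (ℙ : Measure Ω) [IsProbabilityMeasure ℙ]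
    (n : ℕ) (s : Fin n → Set Ω) (t : Set Ω)
    (α β : Finset (Finset (Fin n)))
    (hord : ∀ b ∈ β, ∃ a ∈ α, a ⊆ b)
    (htβ : 0 < ℙ (t ∩ ⋃ b ∈ β, ⋂ i ∈ b, s i)) :
    logb 2 (1 / (ℙ (⋃ a ∈ α, ⋂ i ∈ a, s i)).toReal)
        ≤ logb 2 (1 / (ℙ (⋃ b ∈ β, ⋂ i ∈ b, s i)).toReal) ∧
    logb 2 ((ℙ t).toReal / (ℙ (t ∩ ⋃ a ∈ α, ⋂ i ∈ a, s i)).toReal)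
        ≤ logb 2 ((ℙ t).toReal / (ℙ (t ∩ ⋃ b ∈ β, ⋂ i ∈ b, s i)).toReal) := by
  have hsub := Set.biUnion_biInter_subset_of_forall_exists_subset s hord
  have hβ : 0 < ℙ (⋃ b ∈ β, ⋂ i ∈ b, s i) := htβ.trans_le (measure_mono Set.inter_subset_right)
  exact ⟨logb_div_measureReal_le_of_subset one_lt_two zero_le_one hsub hβ,
    logb_div_measureReal_le_of_subset one_lt_two ENNReal.toReal_nonneg
      (Set.inter_subset_inter_right t hsub) htβ⟩

theorem shared_info_monotone_on_redundancy_lattice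
    {Ω : Type*} [MeasurableSpace Ω] (ℙ : Measure Ω) [IsProbabilityMeasure ℙ]
    (n : ℕ) (s : Fin n → Set Ω) (t : Set Ω)
    (α β : Finset (Finset (Fin n)))
    (hα : ∀ a ∈ α, a.Nonempty) (hβ : ∀ b ∈ β, b.Nonempty)
    (hord : ∀ b ∈ β, ∃ a ∈ α, a ⊆ b)
    (ht : 0 < ℙ t)
    (htβ : 0 < ℙ (t ∩ ⋃ b ∈ β, ⋂ i ∈ b, s i)) :
    logb 2 (1 / (ℙ (⋃ a ∈ α, ⋂ i ∈ a, s i)).toReal)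
        ≤ logb 2 (1 / (ℙ (⋃ b ∈ β, ⋂ i ∈ b, s i)).toReal) ∧
    logb 2 ((ℙ t).toReal / (ℙ (t ∩ ⋃ a ∈ α, ⋂ i ∈ a, s i)).toReal)
        ≤ logb 2 ((ℙ t).toReal / (ℙ (t ∩ ⋃ b ∈ β, ⋂ i ∈ b, s i)).toReal) :=
  shared_info_monotone_on_redundancy_lattice_general ℙ n s t α β hord htβ
end

section
/- Let L be a finite lattice and let f, π : L → ℝ satisfy f(a) = Σ_{b ≤ a} π(b) for all a ∈ L. For α ∈ L let α⁻ denote the set of elements of L covered by α (i.e., the maximal elements strictly below α). Then for every α ∈ L: π(α) = f(α) − Σ_{∅ ≠ B ⊆ α⁻} (−1)^{|B|−1} f(⋀B), where ⋀B denotes the infimum in L of the nonempty set B. -/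
/-!
Since `f (⋀ B) = ∑_{b ≤ ⋀ B} π b` is the sum of `π` over `⋂_{γ ∈ B} ↓γ`, the alternating sum is
inclusion–exclusion for `⋃_{γ ⋖ α} ↓γ`, and in a finite order this union is exactly `{b | b < α}`.
-/

open Finset

section

variable {L : Type*}

open scoped Classical in
theorem Finset.filter_lt_eq_biUnion_covBy [PartialOrder L] [IsStronglyCoatomic L] [Fintype L]
    (α : L) :
    univ.filter (· < α) = (univ.filter (· ⋖ α)).biUnion fun γ ↦ univ.filter (· ≤ γ) := by
  ext b
  simp only [mem_filter, mem_univ, true_and, mem_biUnion]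
  constructor
  · intro hb
    obtain ⟨γ, hbγ, hγα⟩ := exists_le_covBy_of_lt hb
    exact ⟨γ, hγα, hbγ⟩
  · rintro ⟨γ, hγα, hbγ⟩
    exact hbγ.trans_lt hγα.lt

open scoped Classical in
theorem Finset.inf'_filter_le [SemilatticeInf L] [Fintype L] (B : Finset L) (hB : B.Nonempty) :
    B.inf' hB (fun γ ↦ univ.filter (· ≤ γ)) = univ.filter (· ≤ B.inf' hB id) := by
  ext b
  simp [le_inf'_iff]

end

open scoped Classical in
theorem moebius_inversion_on_finite_lattice
    {L : Type*} [Lattice L] [Fintype L]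
    (f π : L → ℝ)
    (h : ∀ a : L, f a = ∑ b ∈ Finset.univ.filter (· ≤ a), π b)
    (α : L) :
    π α = f α -
      ∑ B ∈ ((Finset.univ.filter (· ⋖ α)).powerset.filter Finset.Nonempty).attach,
        (-1 : ℝ) ^ (B.1.card - 1) *
          f (B.1.inf' (Finset.mem_filter.mp B.2).2 id) := by
  have sum_lt : ∑ b ∈ univ.filter (· < α), π b =
      ∑ B ∈ ((univ.filter (· ⋖ α)).powerset.filter Finset.Nonempty).attach,
        (-1 : ℝ) ^ (B.1.card - 1) * f (B.1.inf' (mem_filter.mp B.2).2 id) := by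
    rw [filter_lt_eq_biUnion_covBy, inclusion_exclusion_sum_biUnion, univ_eq_attach]
    refine sum_congr rfl fun B _ ↦ ?_
    have hcard : 1 ≤ B.1.card := one_le_card.mpr (mem_filter.mp B.2).2
    rw [inf'_filter_le, ← h, zsmul_eq_mul, Int.cast_pow, Int.cast_neg, Int.cast_one,
      show B.1.card + 1 = B.1.card - 1 + 2 by omega, pow_add]
    simp
  have sum_le : f α = π α + ∑ b ∈ univ.filter (· < α), π b := by
    rw [h α, ← add_sum_erase (univ.filter (· ≤ α)) π (mem_filter.mpr ⟨mem_univ α, le_rfl⟩)]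
    congr 2
    ext b
    simp [lt_iff_le_and_ne, and_comm]
  rw [← sum_lt, sum_le]
  ring
end

section
/- Let (Ω, 𝔄, ℙ) be a probability space, A an event, and E₁, …, E_k events such that A ⊆ E_i for all i and ℙ(E_i ∩ E_j) = ℙ(A) for all i ≠ j. Then for every nonempty subset B ⊆ {1,…,k}: ℙ(⋃_{i∈B} E_i) = ℙ(A) + Σ_{i∈B} (ℙ(E_i) − ℙ(A)). In particular, writing d_i := ℙ(E_i) − ℙ(A) ≥ 0, the probability of the union of any subfamily of the E_i equals ℙ(A) plus the sum of the corresponding increments d_i. -/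
open MeasureTheory Set

section

variable {Ω ι : Type*} [MeasurableSpace Ω] {μ : Measure Ω} {A : Set Ω}

lemma aedisjoint_sdiff_of_measure_inter_eq (hA : NullMeasurableSet A μ) (hA_fin : μ A ≠ ⊤)
    {S T : Set Ω} (hAS : A ⊆ S) (hAT : A ⊆ T) (h : μ (S ∩ T) = μ A) :
    AEDisjoint μ (S \ A) (T \ A) := by
  change μ ((S \ A) ∩ (T \ A)) = 0
  rw [show (S \ A) ∩ (T \ A) = (S ∩ T) \ A from inf_sdiff.symm,
    measure_sdiff (subset_inter hAS hAT) hA hA_fin, h, tsub_self]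

/-- Outside `A` the events `E i` are a.e. disjoint, so the union is `A` plus these disjoint
pieces, each of mass `μ (E i) - μ A`. -/
theorem measureReal_biUnion_eq_add_sum_of_inter_eq [IsFiniteMeasure μ] {E : ι → Set Ω}
    (hA : MeasurableSet A) (hE : ∀ i, MeasurableSet (E i)) (hsub : ∀ i, A ⊆ E i)
    (hpair : ∀ i j, i ≠ j → μ (E i ∩ E j) = μ A) {s : Finset ι} (hs : s.Nonempty) :
    μ.real (⋃ i ∈ s, E i) = μ.real A + ∑ i ∈ s, (μ.real (E i) - μ.real A) := by
  obtain ⟨i₀, hi₀⟩ := hs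
  have hA_union : A ⊆ ⋃ i ∈ s, E i := (hsub i₀).trans (subset_biUnion_of_mem hi₀)
  have hunion_sdiff : (⋃ i ∈ s, E i) \ A = ⋃ i ∈ s, (E i \ A) := by simp_rw [iUnion_sdiff]
  have hdisj : (s : Set ι).Pairwise fun i j ↦ AEDisjoint μ (E i \ A) (E j \ A) :=
    fun i _ j _ hij ↦ aedisjoint_sdiff_of_measure_inter_eq hA.nullMeasurableSet
      (measure_ne_top μ A) (hsub i) (hsub j) (hpair i j hij)
  calc μ.real (⋃ i ∈ s, E i) = μ.real A + μ.real ((⋃ i ∈ s, E i) \ A) := by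
        rw [measureReal_sdiff hA_union hA (measure_ne_top μ _)]; ring
    _ = μ.real A + ∑ i ∈ s, μ.real (E i \ A) := by
        rw [hunion_sdiff,
          measureReal_biUnion_finset₀ hdisj fun i _ ↦ ((hE i).diff hA).nullMeasurableSet]
    _ = μ.real A + ∑ i ∈ s, (μ.real (E i) - μ.real A) := by
        rw [Finset.sum_congr rfl fun i _ ↦ measureReal_sdiff (hsub i) hA (measure_ne_top μ _)]

end

theorem prob_union_of_children_events
    {Ω : Type*} [MeasurableSpace Ω] (ℙ : Measure Ω) [IsProbabilityMeasure ℙ]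
    (k : ℕ) (A : Set Ω) (E : Fin k → Set Ω)
    (hA : MeasurableSet A) (hE : ∀ i, MeasurableSet (E i))
    (hsub : ∀ i, A ⊆ E i)
    (hpair : ∀ i j, i ≠ j → ℙ (E i ∩ E j) = ℙ A) :
    ∀ B : Finset (Fin k), B.Nonempty →
      (ℙ (⋃ i ∈ B, E i)).toReal
        = (ℙ A).toReal + ∑ i ∈ B, ((ℙ (E i)).toReal - (ℙ A).toReal) :=
  fun _ hB ↦ measureReal_biUnion_eq_add_sum_of_inter_eq hA hE hsub hpair hB
end

section
/- Let k ≥ 1, let p > 0, and let d₁, …, d_k ≥ 0 be real numbers. Then Σ_{B ⊆ {1,…,k}} (−1)^{|B|} · log₂(p + Σ_{i∈B} d_i) ≤ 0, where the sum ranges over all subsets B of {1,…,k} (the empty set contributing log₂ p). Equivalently, −log₂ p + Σ_{∅ ≠ B ⊆ {1,…,k}} (−1)^{|B|−1} log₂(p + Σ_{i∈B} d_i) ≥ 0. -/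
/-!
Write `A_s φ (x) = ∑_{B ⊆ s} (-1)^|B| φ (x + ∑_{i ∈ B} d_i)`. Splitting off one index `a` gives
`A_{s ∪ {a}} φ (x) = A_s φ (x) - A_s φ (x + d_a)`, and `A_s` commutes with `d/dx`. Hence if
`A_s φ' ≥ 0` on `(0, ∞)` then `A_s φ` is monotone there and `A_{s ∪ {a}} φ ≤ 0`.
For `φ = y ^ m` this gives `A_s (y ^ m) ≥ 0` for all `m < 0` at once, by induction on `s`
(the derivative `m y ^ (m - 1)` stays in the family), and then, since `log' = y ^ (-1)`,
`A_s log ≤ 0` for nonempty `s`.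
-/

open Real Finset

section AltSum

variable {ι : Type*}

noncomputable def altSum (s : Finset ι) (d : ι → ℝ) (φ : ℝ → ℝ) (x : ℝ) : ℝ :=
  ∑ B ∈ s.powerset, (-1) ^ #B * φ (x + ∑ i ∈ B, d i)

variable {s : Finset ι} {d : ι → ℝ} {φ φ' : ℝ → ℝ} {x : ℝ}

lemma altSum_const_mul (c : ℝ) :
    altSum s d (fun y => c * φ y) x = c * altSum s d φ x := by
  simp only [altSum, mul_sum]
  exact sum_congr rfl fun _ _ => by ring

lemma altSum_insert [DecidableEq ι] {a : ι} (ha : a ∉ s) :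
    altSum (insert a s) d φ x = altSum s d φ x - altSum s d φ (x + d a) := by
  rw [altSum, sum_powerset_insert ha, sub_eq_add_neg, altSum, altSum, ← sum_neg_distrib]
  congr 1
  refine sum_congr rfl fun B hB => ?_
  have haB : a ∉ B := fun h => ha (mem_powerset.1 hB h)
  rw [card_insert_of_notMem haB, sum_insert haB, pow_succ, add_assoc]
  ring

lemma hasDerivAt_altSum (hd : ∀ i, 0 ≤ d i) (hφ : ∀ y > 0, HasDerivAt φ (φ' y) y)
    (hx : 0 < x) : HasDerivAt (altSum s d φ) (altSum s d φ' x) x := by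
  refine HasDerivAt.fun_sum fun B _ => HasDerivAt.const_mul _ ?_
  have hpos : 0 < x + ∑ i ∈ B, d i := add_pos_of_pos_of_nonneg hx (sum_nonneg fun i _ => hd i)
  exact (hφ _ hpos).comp_add_const x _

lemma monotoneOn_altSum (hd : ∀ i, 0 ≤ d i) (hφ : ∀ y > 0, HasDerivAt φ (φ' y) y)
    (hφ' : ∀ y > 0, 0 ≤ altSum s d φ' y) : MonotoneOn (altSum s d φ) (Set.Ioi 0) := by
  have hderiv (y : ℝ) (hy : y ∈ Set.Ioi 0) := hasDerivAt_altSum (s := s) hd hφ hy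
  refine monotoneOn_of_hasDerivWithinAt_nonneg (f' := altSum s d φ') (convex_Ioi 0)
    (fun y hy => (hderiv y hy).continuousAt.continuousWithinAt) ?_ ?_ <;>
    rw [interior_Ioi]
  · exact fun y hy => (hderiv y hy).hasDerivWithinAt
  · exact hφ'

lemma altSum_insert_nonpos [DecidableEq ι] {a : ι} (ha : a ∉ s) (hd : ∀ i, 0 ≤ d i)
    (hφ : ∀ y > 0, HasDerivAt φ (φ' y) y) (hφ' : ∀ y > 0, 0 ≤ altSum s d φ' y) (hx : 0 < x) :
    altSum (insert a s) d φ x ≤ 0 := by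
  have hxa : 0 < x + d a := add_pos_of_pos_of_nonneg hx (hd a)
  rw [altSum_insert ha, sub_nonpos]
  exact monotoneOn_altSum hd hφ hφ' hx hxa (le_add_of_nonneg_right (hd a))

lemma altSum_zpow_nonneg (hd : ∀ i, 0 ≤ d i) {m : ℤ} (hm : m < 0) (hx : 0 < x) :
    0 ≤ altSum s d (· ^ m) x := by
  classical
  induction s using Finset.induction_on generalizing m x with
  | empty => simpa [altSum] using zpow_nonneg hx.le m
  | insert a s ha ih =>
    have hderiv : ∀ y > (0 : ℝ), HasDerivAt (fun y => -1 * y ^ m) (-m * y ^ (m - 1)) y :=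
      fun y hy => by simpa using (hasDerivAt_zpow m y (Or.inl hy.ne')).const_mul (-1)
    have hderiv_nonneg : ∀ y > 0, 0 ≤ altSum s d (fun y => -m * y ^ (m - 1)) y := fun y hy => by
      rw [altSum_const_mul]
      exact mul_nonneg (neg_nonneg.2 (Int.cast_nonpos.2 hm.le)) (ih (by omega) hy)
    have h := altSum_insert_nonpos ha hd hderiv hderiv_nonneg hx
    rwa [altSum_const_mul, neg_one_mul, neg_nonpos] at h

lemma altSum_logb_nonpos [DecidableEq ι] {a : ι} (ha : a ∉ s) (hd : ∀ i, 0 ≤ d i) {b : ℝ}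
    (hb : 1 < b) (hx : 0 < x) : altSum (insert a s) d (logb b) x ≤ 0 := by
  have hderiv : ∀ y > 0, HasDerivAt (logb b) ((log b)⁻¹ * y ^ (-1 : ℤ)) y := fun y hy => by
    rw [zpow_neg_one, inv_mul_eq_div]
    exact (hasDerivAt_log hy.ne').div_const (log b)
  refine altSum_insert_nonpos ha hd hderiv (fun y hy => ?_) hx
  rw [altSum_const_mul]
  exact mul_nonneg (inv_nonneg.2 (log_pos hb).le) (altSum_zpow_nonneg hd (by norm_num) hy)

end AltSum

lemma Finset.sum_powerset_neg_one_pow_card_eq_sub {ι : Type*} (s : Finset ι)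
    (f : Finset ι → ℝ) :
    ∑ B ∈ s.powerset, (-1) ^ #B * f B =
      f ∅ - ∑ B ∈ s.powerset.filter Finset.Nonempty, (-1) ^ (#B - 1) * f B := by
  classical
  rw [← sum_filter_add_sum_filter_not s.powerset Finset.Nonempty, add_comm, sub_eq_add_neg,
    ← sum_neg_distrib]
  have hempty : s.powerset.filter (fun B => ¬ B.Nonempty) = {∅} := by
    ext B
    simp only [mem_filter, mem_powerset, not_nonempty_iff_eq_empty, mem_singleton]
    exact ⟨And.right, fun h => ⟨h ▸ empty_subset s, h⟩⟩
  rw [hempty, sum_singleton, card_empty, pow_zero, one_mul]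
  congr 1
  refine sum_congr rfl fun B hB => ?_
  obtain ⟨n, hn⟩ := Nat.exists_eq_add_one_of_ne_zero (card_pos.2 (mem_filter.1 hB).2).ne'
  rw [hn, Nat.add_sub_cancel, pow_succ]
  ring

theorem alternating_log_sum_nonpos
    (k : ℕ) (hk : 1 ≤ k) (p : ℝ) (hp : 0 < p)
    (d : Fin k → ℝ) (hd : ∀ i, 0 ≤ d i) :
    (∑ B : Finset (Fin k), (-1 : ℝ) ^ B.card * logb 2 (p + ∑ i ∈ B, d i)) ≤ 0 ∧
    0 ≤ -logb 2 p +
      ∑ B ∈ (Finset.univ : Finset (Fin k)).powerset.filter Finset.Nonempty,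
        (-1 : ℝ) ^ (B.card - 1) * logb 2 (p + ∑ i ∈ B, d i) := by
  let a : Fin k := ⟨0, hk⟩
  have hsum : ∑ B : Finset (Fin k), (-1 : ℝ) ^ B.card * logb 2 (p + ∑ i ∈ B, d i) =
      altSum univ d (logb 2) p := by
    rw [altSum, powerset_univ]
  have hnonpos : altSum univ d (logb 2) p ≤ 0 := by
    rw [← insert_erase (mem_univ a)]
    exact altSum_logb_nonpos (notMem_erase a _) hd one_lt_two hp
  refine ⟨hsum ▸ hnonpos, ?_⟩
  rw [← powerset_univ, sum_powerset_neg_one_pow_card_eq_sub] at hsum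
  simp only [sum_empty, add_zero] at hsum
  linarith
end

section
/- Let (Ω, 𝔄, ℙ) be a probability space, A an event with ℙ(A) > 0, and E₁, …, E_k events such that A ⊆ E_i for all i and ℙ(E_i ∩ E_j) = ℙ(A) for all i ≠ j. Then the informative partial information atom is nonnegative: −log₂ ℙ(A) + Σ_{∅ ≠ B ⊆ {1,…,k}} (−1)^{|B|−1} log₂ ℙ(⋃_{i∈B} E_i) ≥ 0. -/
/-!
With `a = ℙ A` and `dᵢ = ℙ (Eᵢ \ A)`, the sets `Eᵢ \ A` meet pairwise in null sets, so
`ℙ (⋃ i ∈ B, Eᵢ) = a + ∑ i ∈ B, dᵢ` for `B ≠ ∅`, and the atom is `-∑_{B ⊆ [k]} (-1)^|B| log₂ (a + d(B))`.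
Such alternating sums are iterated forward differences, and those of `log` have a fixed sign because
`log' = x⁻¹` is completely monotone: by induction on `s`, `∑_{B ⊆ s} (-1)^|B| (x + d(B))^(-n) ≥ 0` for
all `n`, since the sum over `s` is antitone in `x`, its derivative being `-n` times the sum for `n + 1`.
-/

open MeasureTheory Real

lemma hasDerivAt_zpow_neg (n : ℕ) {y : ℝ} (hy : 0 < y) :
    HasDerivAt (fun z : ℝ => z ^ (-(n : ℤ))) (-n * y ^ (-((n + 1 : ℕ) : ℤ))) y := by
  have h := hasDerivAt_zpow (-(n : ℤ)) y (Or.inl hy.ne')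
  rwa [show -(n : ℤ) - 1 = -((n + 1 : ℕ) : ℤ) by push_cast; ring, Int.cast_neg,
    Int.cast_natCast] at h

-- `altPowersetSum f d s x = (-1) ^ #s • (Δ_{d i₁} ⋯ Δ_{d iₘ} f) x` for `s = {i₁, …, iₘ}`.
noncomputable def altPowersetSum {ι : Type*} (f : ℝ → ℝ) (d : ι → ℝ) (s : Finset ι) (x : ℝ) : ℝ :=
  ∑ B ∈ s.powerset, (-1) ^ B.card * f (x + ∑ i ∈ B, d i)

namespace altPowersetSum

variable {ι : Type*} {f f' : ℝ → ℝ} {d : ι → ℝ} {s : Finset ι} {x : ℝ}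

@[simp]
lemma empty (f : ℝ → ℝ) (d : ι → ℝ) (x : ℝ) : altPowersetSum f d ∅ x = f x := by
  simp [altPowersetSum]

lemma const_mul (c : ℝ) (f : ℝ → ℝ) (d : ι → ℝ) (s : Finset ι) (x : ℝ) :
    altPowersetSum (fun y => c * f y) d s x = c * altPowersetSum f d s x := by
  simp only [altPowersetSum, Finset.mul_sum]
  exact Finset.sum_congr rfl fun B _ => mul_left_comm _ _ _

lemma insert [DecidableEq ι] {a : ι} (ha : a ∉ s) (f : ℝ → ℝ) (d : ι → ℝ) (x : ℝ) :
    altPowersetSum f d (insert a s) x = altPowersetSum f d s x - altPowersetSum f d s (x + d a) := by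
  rw [altPowersetSum, Finset.sum_powerset_insert ha, sub_eq_add_neg, altPowersetSum,
    altPowersetSum, ← Finset.sum_neg_distrib]
  congr 1
  refine Finset.sum_congr rfl fun B hB => ?_
  have haB : a ∉ B := fun h => ha (Finset.mem_powerset.mp hB h)
  rw [Finset.card_insert_of_notMem haB, Finset.sum_insert haB, pow_succ, ← add_assoc]
  ring

lemma eq_sub_sum_nonempty (f : ℝ → ℝ) (d : ι → ℝ) (s : Finset ι) (x : ℝ) :
    altPowersetSum f d s x =
      f x - ∑ B ∈ s.powerset.filter Finset.Nonempty,
        (-1) ^ (B.card - 1) * f (x + ∑ i ∈ B, d i) := by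
  have hempty : ∑ B ∈ s.powerset.filter (¬ ·.Nonempty),
      (-1 : ℝ) ^ B.card * f (x + ∑ i ∈ B, d i) = f x := by
    rw [Finset.sum_eq_single_of_mem ∅ (by simp)] <;> simp +contextual
  have hsign : ∀ B ∈ s.powerset.filter Finset.Nonempty,
      (-1 : ℝ) ^ B.card * f (x + ∑ i ∈ B, d i) =
        -((-1) ^ (B.card - 1) * f (x + ∑ i ∈ B, d i)) := by
    intro B hB
    rw [← Nat.sub_add_cancel (Finset.mem_filter.mp hB).2.card_pos, pow_succ]
    simp
  rw [altPowersetSum, ← Finset.sum_filter_add_sum_filter_not _ Finset.Nonempty, hempty,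
    Finset.sum_congr rfl hsign, Finset.sum_neg_distrib]
  ring

lemma hasDerivAt (hf : ∀ y, 0 < y → HasDerivAt f (f' y) y) (hd : ∀ i, 0 ≤ d i) (hx : 0 < x) :
    HasDerivAt (altPowersetSum f d s) (altPowersetSum f' d s x) x := by
  refine HasDerivAt.fun_sum fun B _ => HasDerivAt.const_mul _ ?_
  have hpos : 0 < x + ∑ i ∈ B, d i := by
    linarith [Finset.sum_nonneg fun i (_ : i ∈ B) => hd i]
  simpa using (hf _ hpos).comp_add_const x (∑ i ∈ B, d i)

lemma monotoneOn (hf : ∀ y, 0 < y → HasDerivAt f (f' y) y) (hd : ∀ i, 0 ≤ d i)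
    (hf' : ∀ y, 0 < y → 0 ≤ altPowersetSum f' d s y) :
    MonotoneOn (altPowersetSum f d s) (Set.Ioi 0) := by
  have hder := fun y (hy : 0 < y) => hasDerivAt (s := s) hf hd hy
  refine monotoneOn_of_hasDerivWithinAt_nonneg (f' := altPowersetSum f' d s) (convex_Ioi 0)
    (fun y hy => (hder y hy).continuousAt.continuousWithinAt) (fun y hy => ?_) (fun y hy => ?_)
  · rw [interior_Ioi] at hy ⊢
    exact (hder y hy).hasDerivWithinAt
  · rw [interior_Ioi] at hy
    exact hf' y hy

lemma antitoneOn (hf : ∀ y, 0 < y → HasDerivAt f (f' y) y) (hd : ∀ i, 0 ≤ d i)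
    (hf' : ∀ y, 0 < y → altPowersetSum f' d s y ≤ 0) :
    AntitoneOn (altPowersetSum f d s) (Set.Ioi 0) := by
  have hder := fun y (hy : 0 < y) => hasDerivAt (s := s) hf hd hy
  refine antitoneOn_of_hasDerivWithinAt_nonpos (f' := altPowersetSum f' d s) (convex_Ioi 0)
    (fun y hy => (hder y hy).continuousAt.continuousWithinAt) (fun y hy => ?_) (fun y hy => ?_)
  · rw [interior_Ioi] at hy ⊢
    exact (hder y hy).hasDerivWithinAt
  · rw [interior_Ioi] at hy
    exact hf' y hy

lemma zpow_neg_nonneg [DecidableEq ι] (hd : ∀ i, 0 ≤ d i) (n : ℕ) (hx : 0 < x) :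
    0 ≤ altPowersetSum (fun y => y ^ (-(n : ℤ))) d s x := by
  induction s using Finset.induction_on generalizing n x with
  | empty => rw [empty]; positivity
  | @insert a s ha ih =>
    have hanti : AntitoneOn (altPowersetSum (fun y => y ^ (-(n : ℤ))) d s) (Set.Ioi 0) :=
      antitoneOn (fun y hy => hasDerivAt_zpow_neg n hy) hd fun y hy => by
        rw [const_mul]
        exact mul_nonpos_of_nonpos_of_nonneg (by simp) (ih (n + 1) hy)
    rw [insert ha]
    have hxa : x ≤ x + d a := le_add_of_nonneg_right (hd a)
    linarith [hanti (Set.mem_Ioi.mpr hx) (Set.mem_Ioi.mpr (hx.trans_le hxa)) hxa]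

lemma log_nonpos [DecidableEq ι] (hd : ∀ i, 0 ≤ d i) (hs : s.Nonempty) (hx : 0 < x) :
    altPowersetSum log d s x ≤ 0 := by
  obtain ⟨a, ha⟩ := hs
  have hmono : MonotoneOn (altPowersetSum log d (s.erase a)) (Set.Ioi 0) :=
    monotoneOn (fun y hy => hasDerivAt_log hy.ne') hd fun y hy => by
      simpa using zpow_neg_nonneg (s := s.erase a) hd 1 hy
  rw [← Finset.insert_erase ha, insert (Finset.notMem_erase a s)]
  have hxa : x ≤ x + d a := le_add_of_nonneg_right (hd a)
  linarith [hmono (Set.mem_Ioi.mpr hx) (Set.mem_Ioi.mpr (hx.trans_le hxa)) hxa]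

end altPowersetSum

lemma measure_biUnion_eq_add_sum_diff {Ω ι : Type*} [MeasurableSpace Ω] {μ : Measure Ω}
    {A : Set Ω} {E : ι → Set Ω} {B : Finset ι} (hA : MeasurableSet A)
    (hE : ∀ i, MeasurableSet (E i)) (hA_ne_top : μ A ≠ ⊤) (hsub : ∀ i, A ⊆ E i)
    (hpair : ∀ i j, i ≠ j → μ (E i ∩ E j) = μ A) (hB : B.Nonempty) :
    μ (⋃ i ∈ B, E i) = μ A + ∑ i ∈ B, μ (E i \ A) := by
  have hunion : ⋃ i ∈ B, E i = A ∪ ⋃ i ∈ B, E i \ A := by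
    obtain ⟨j, hj⟩ := hB
    ext x
    by_cases hx : x ∈ A
    · simpa [hx] using ⟨j, hj, hsub j hx⟩
    · simp [hx]
  have hnull : ∀ i j, i ≠ j → μ ((E i \ A) ∩ (E j \ A)) = 0 := fun i j hij => by
    rw [← Set.sdiff_inter_distrib_right, measure_sdiff (Set.subset_inter (hsub i) (hsub j))
      hA.nullMeasurableSet hA_ne_top, hpair i j hij, tsub_self]
  have hdisj : Disjoint A (⋃ i ∈ B, E i \ A) :=
    Set.disjoint_iUnion₂_right.mpr fun i _ => Set.disjoint_sdiff_right
  rw [hunion, measure_union hdisj (B.measurableSet_biUnion fun i _ => (hE i).diff hA),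
    measure_biUnion_finset₀ (fun i _ j _ hij => hnull i j hij)
      fun i _ => ((hE i).diff hA).nullMeasurableSet]

theorem informative_atom_nonneg
    {Ω : Type*} [MeasurableSpace Ω] (ℙ : Measure Ω) [IsProbabilityMeasure ℙ]
    (k : ℕ) (A : Set Ω) (E : Fin k → Set Ω)
    (hA : MeasurableSet A) (hE : ∀ i, MeasurableSet (E i))
    (hApos : 0 < ℙ A)
    (hsub : ∀ i, A ⊆ E i)
    (hpair : ∀ i j, i ≠ j → ℙ (E i ∩ E j) = ℙ A) :
    0 ≤ -logb 2 (ℙ A).toReal +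
      ∑ B ∈ (Finset.univ : Finset (Fin k)).powerset.filter Finset.Nonempty,
        (-1 : ℝ) ^ (B.card - 1) * logb 2 (ℙ (⋃ i ∈ B, E i)).toReal := by
  classical
  set a := (ℙ A).toReal
  set d : Fin k → ℝ := fun i => (ℙ (E i \ A)).toReal
  have ha : 0 < a := ENNReal.toReal_pos hApos.ne' (measure_ne_top ℙ A)
  have hd : ∀ i, 0 ≤ d i := fun i => ENNReal.toReal_nonneg
  have hunion : ∀ B ∈ (Finset.univ : Finset (Fin k)).powerset.filter Finset.Nonempty,
      (ℙ (⋃ i ∈ B, E i)).toReal = a + ∑ i ∈ B, d i := fun B hB => by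
    rw [measure_biUnion_eq_add_sum_diff hA hE (measure_ne_top ℙ A) hsub hpair
      (Finset.mem_filter.mp hB).2, ENNReal.toReal_add (measure_ne_top ℙ _)
      (ENNReal.sum_ne_top.mpr fun i _ => measure_ne_top ℙ _),
      ENNReal.toReal_sum fun i _ => measure_ne_top ℙ _]
  have hlog : altPowersetSum log d Finset.univ a ≤ 0 := by
    rcases (Finset.univ : Finset (Fin k)).eq_empty_or_nonempty with h | h
    · rw [h, altPowersetSum.empty]
      exact log_nonpos ha.le measureReal_le_one
    · exact altPowersetSum.log_nonpos hd h ha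
  have hlogb : altPowersetSum (logb 2) d Finset.univ a ≤ 0 := by
    have hlogb_eq : logb 2 = fun y => (log 2)⁻¹ * log y := funext fun y => div_eq_inv_mul _ _
    rw [hlogb_eq, altPowersetSum.const_mul]
    exact mul_nonpos_of_nonneg_of_nonpos (by positivity) hlog
  rw [altPowersetSum.eq_sub_sum_nonempty] at hlogb
  rw [Finset.sum_congr rfl fun B hB => by rw [hunion B hB]]
  linarith
end

section
/- Let (Ω, 𝔄, ℙ) be a probability space, T and A events with ℙ(T ∩ A) > 0, and E₁, …, E_k events such that A ⊆ E_i for all i and ℙ(T ∩ E_i ∩ E_j) = ℙ(T ∩ A) for all i ≠ j. Then the misinformative partial information atom is nonnegative: −log₂ ℙ(T ∩ A) + Σ_{∅ ≠ B ⊆ {1,…,k}} (−1)^{|B|−1} log₂ ℙ(T ∩ ⋃_{i∈B} E_i) ≥ 0. -/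
/-!
Put `a = ℙ(T ∩ A)` and `qᵢ = ℙ((T ∩ Eᵢ) \ (T ∩ A))`. The pairwise condition makes the sets
`(T ∩ Eᵢ) \ (T ∩ A)` almost disjoint, so `ℙ(T ∩ ⋃_{i ∈ B} Eᵢ) = a + ∑_{i ∈ B} qᵢ` for every
nonempty `B`, and the atom is `-∑_{B ⊆ [k]} (-1)^|B| log₂ (a + ∑_{i ∈ B} qᵢ)`.

Singling out one index `j`, such an alternating sum is `Φ a - Φ (a + q_j)`, where `Φ` is the
alternating sum over the other indices; `Φ` is monotone because its derivative is the analogous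
alternating sum for `x⁻¹`, and it remains to show `log₂ a ≤ 0` when no index is left. The alternating
sums of the powers `x ^ (-n)` are nonnegative by the same induction on the index set, since
`x ^ (-n)` has derivative `-n x ^ (-n - 1)`.
-/

open Finset Real MeasureTheory

-- `(-1) ^ #s` times the iterated forward difference `Δ_{q i₁} ⋯ Δ_{q iₙ} f x`, where `s = {i₁, …, iₙ}`
noncomputable def altShiftSum {ι : Type*} (s : Finset ι) (q : ι → ℝ) (f : ℝ → ℝ) (x : ℝ) : ℝ :=
  ∑ B ∈ s.powerset, (-1) ^ B.card * f (x + ∑ i ∈ B, q i)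

section AltShiftSum

variable {ι : Type*} {s : Finset ι} {q : ι → ℝ}

@[simp]
theorem altShiftSum_empty (q : ι → ℝ) (f : ℝ → ℝ) (x : ℝ) : altShiftSum ∅ q f x = f x := by
  simp [altShiftSum]

theorem altShiftSum_insert [DecidableEq ι] {j : ι} (hj : j ∉ s) (f : ℝ → ℝ) (x : ℝ) :
    altShiftSum (insert j s) q f x = altShiftSum s q f x - altShiftSum s q f (x + q j) := by
  rw [altShiftSum, sum_powerset_insert hj, sub_eq_add_neg, altShiftSum, altShiftSum,
    ← sum_neg_distrib]
  congr 1
  refine sum_congr rfl fun B hB => ?_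
  have hjB : j ∉ B := fun h => hj (mem_powerset.1 hB h)
  rw [card_insert_of_notMem hjB, sum_insert hjB, pow_succ, ← add_assoc]
  ring

theorem altShiftSum_const_mul (c : ℝ) (f : ℝ → ℝ) (x : ℝ) :
    altShiftSum s q (fun y => c * f y) x = c * altShiftSum s q f x := by
  simp only [altShiftSum, mul_sum]
  exact sum_congr rfl fun _ _ => by ring

theorem altShiftSum_div_const (f : ℝ → ℝ) (c x : ℝ) :
    altShiftSum s q (fun y => f y / c) x = altShiftSum s q f x / c := by
  simp only [altShiftSum, sum_div, mul_div_assoc]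

theorem altShiftSum_eq_neg_sum_nonempty (f : ℝ → ℝ) (x : ℝ) :
    altShiftSum s q f x = -(-f x + ∑ B ∈ s.powerset.filter Finset.Nonempty,
      (-1) ^ (B.card - 1) * f (x + ∑ i ∈ B, q i)) := by
  have hempty : s.powerset.filter (¬ ·.Nonempty) = {∅} := by
    ext B
    simp only [mem_filter, mem_powerset, not_nonempty_iff_eq_empty, mem_singleton]
    exact ⟨And.right, fun h => ⟨h ▸ empty_subset s, h⟩⟩
  rw [altShiftSum, ← sum_filter_add_sum_filter_not _ Finset.Nonempty, hempty, sum_singleton,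
    neg_add, neg_neg, ← sum_neg_distrib]
  simp only [card_empty, pow_zero, sum_empty, add_zero, one_mul, add_comm (f x)]
  congr 1
  refine sum_congr rfl fun B hB => ?_
  obtain ⟨n, hn⟩ := Nat.exists_eq_add_of_lt (mem_filter.1 hB).2.card_pos
  rw [hn, zero_add, Nat.add_sub_cancel, pow_succ]
  ring

theorem hasDerivAt_altShiftSum {f f' : ℝ → ℝ} (hf : ∀ y, 0 < y → HasDerivAt f (f' y) y)
    (hq : ∀ i ∈ s, 0 ≤ q i) {x : ℝ} (hx : 0 < x) :
    HasDerivAt (altShiftSum s q f) (altShiftSum s q f' x) x := by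
  refine HasDerivAt.fun_sum fun B hB => ((hf _ ?_).comp_add_const x _).const_mul _
  have := sum_nonneg fun i hi => hq i (mem_powerset.1 hB hi)
  linarith

theorem monotoneOn_altShiftSum {f f' : ℝ → ℝ} (hf : ∀ y, 0 < y → HasDerivAt f (f' y) y)
    (hq : ∀ i ∈ s, 0 ≤ q i) (hf' : ∀ y, 0 < y → 0 ≤ altShiftSum s q f' y) :
    MonotoneOn (altShiftSum s q f) (Set.Ioi 0) := by
  refine monotoneOn_of_hasDerivWithinAt_nonneg (f' := altShiftSum s q f') (convex_Ioi 0)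
    (fun y hy => (hasDerivAt_altShiftSum hf hq hy).continuousAt.continuousWithinAt) ?_ ?_ <;>
  rw [interior_Ioi]
  exacts [fun y hy => (hasDerivAt_altShiftSum hf hq hy).hasDerivWithinAt, hf']

theorem antitoneOn_altShiftSum {f f' : ℝ → ℝ} (hf : ∀ y, 0 < y → HasDerivAt f (f' y) y)
    (hq : ∀ i ∈ s, 0 ≤ q i) (hf' : ∀ y, 0 < y → altShiftSum s q f' y ≤ 0) :
    AntitoneOn (altShiftSum s q f) (Set.Ioi 0) := by
  refine antitoneOn_of_hasDerivWithinAt_nonpos (f' := altShiftSum s q f') (convex_Ioi 0)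
    (fun y hy => (hasDerivAt_altShiftSum hf hq hy).continuousAt.continuousWithinAt) ?_ ?_ <;>
  rw [interior_Ioi]
  exacts [fun y hy => (hasDerivAt_altShiftSum hf hq hy).hasDerivWithinAt, hf']

theorem altShiftSum_zpow_neg_nonneg [DecidableEq ι] (hq : ∀ i ∈ s, 0 ≤ q i) (n : ℕ) {x : ℝ}
    (hx : 0 < x) : 0 ≤ altShiftSum s q (fun y => y ^ (-(n : ℤ))) x := by
  induction s using Finset.induction_on generalizing n x with
  | empty => simp only [altShiftSum_empty]; positivity
  | @insert j s hj ih =>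
    have hqs : ∀ i ∈ s, 0 ≤ q i := fun i hi => hq i (mem_insert_of_mem hi)
    have hqj := hq j (mem_insert_self j s)
    have hderiv : ∀ y : ℝ, 0 < y → HasDerivAt (fun y => y ^ (-(n : ℤ)))
        (-n * y ^ (-((n + 1 : ℕ) : ℤ))) y := fun y hy => by
      refine (hasDerivAt_zpow (-(n : ℤ)) y (.inl hy.ne')).congr_deriv ?_
      rw [show -((n + 1 : ℕ) : ℤ) = -n - 1 by push_cast; ring]
      push_cast; ring
    have hanti := antitoneOn_altShiftSum hderiv hqs fun y hy => by
      rw [altShiftSum_const_mul, neg_mul]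
      exact neg_nonpos.2 (mul_nonneg n.cast_nonneg (ih hqs (n + 1) hy))
    rw [altShiftSum_insert hj, sub_nonneg]
    exact hanti (Set.mem_Ioi.2 hx) (Set.mem_Ioi.2 (by linarith)) (le_add_of_nonneg_right hqj)

theorem altShiftSum_log_nonpos [DecidableEq ι] (hq : ∀ i ∈ s, 0 ≤ q i) {x : ℝ} (hx : 0 < x)
    (hx1 : x ≤ 1) : altShiftSum s q log x ≤ 0 := by
  induction s using Finset.induction_on with
  | empty => simpa using Real.log_nonpos hx.le hx1
  | @insert j s hj _ =>
    have hqs : ∀ i ∈ s, 0 ≤ q i := fun i hi => hq i (mem_insert_of_mem hi)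
    have hqj := hq j (mem_insert_self j s)
    have hmono := monotoneOn_altShiftSum (fun y hy => hasDerivAt_log hy.ne') hqs fun y hy => by
      simpa using altShiftSum_zpow_neg_nonneg hqs 1 hy
    rw [altShiftSum_insert hj, sub_nonpos]
    exact hmono (Set.mem_Ioi.2 hx) (Set.mem_Ioi.2 (by linarith)) (le_add_of_nonneg_right hqj)

theorem altShiftSum_logb_nonpos [DecidableEq ι] {b : ℝ} (hb : 1 < b) (hq : ∀ i ∈ s, 0 ≤ q i)
    {x : ℝ} (hx : 0 < x) (hx1 : x ≤ 1) : altShiftSum s q (logb b) x ≤ 0 := by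
  rw [show logb b = fun y => log y / log b from rfl, altShiftSum_div_const]
  exact div_nonpos_of_nonpos_of_nonneg (altShiftSum_log_nonpos hq hx hx1) (Real.log_nonneg hb.le)

end AltShiftSum

section AlmostDisjoint

variable {Ω ι : Type*} [MeasurableSpace Ω] {μ : Measure Ω} {C : Set Ω}

theorem aedisjoint_sdiff_of_measure_inter_eq_s10 {s t : Set Ω} (hC : NullMeasurableSet C μ)
    (hCfin : μ C ≠ ⊤) (hCst : C ⊆ s ∩ t) (hst : μ (s ∩ t) = μ C) :
    AEDisjoint μ (s \ C) (t \ C) := by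
  rw [AEDisjoint, ← Set.sdiff_inter_distrib_right, measure_sdiff hCst hC hCfin, hst, tsub_self]

theorem measure_biUnion_eq_add_sum_sdiff {D : ι → Set Ω} {B : Finset ι} {i₀ : ι} (hi₀ : i₀ ∈ B)
    (hCD : C ⊆ D i₀) (hD : ∀ i ∈ B, NullMeasurableSet (D i \ C) μ)
    (hdisj : (B : Set ι).Pairwise (Function.onFun (AEDisjoint μ) fun i => D i \ C)) :
    μ (⋃ i ∈ B, D i) = μ C + ∑ i ∈ B, μ (D i \ C) := by
  have hunion : ⋃ i ∈ B, D i = C ∪ ⋃ i ∈ B, (D i \ C) := by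
    ext x
    simp only [Set.mem_union, Set.mem_iUnion, Set.mem_sdiff, exists_prop]
    by_cases hx : x ∈ C
    · exact iff_of_true ⟨i₀, hi₀, hCD hx⟩ (.inl hx)
    · simp [hx]
  have hdisjC : AEDisjoint μ C (⋃ i ∈ B, (D i \ C)) :=
    (Set.disjoint_iUnion₂_right.2 fun _ _ => Set.disjoint_sdiff_right).aedisjoint
  rw [hunion, measure_union₀ (B.nullMeasurableSet_biUnion hD) hdisjC,
    measure_biUnion_finset₀ hdisj hD]

end AlmostDisjoint

theorem misinformative_atom_nonneg
    {Ω : Type*} [MeasurableSpace Ω] (ℙ : Measure Ω) [IsProbabilityMeasure ℙ]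
    (k : ℕ) (T A : Set Ω) (E : Fin k → Set Ω)
    (hT : MeasurableSet T) (hA : MeasurableSet A) (hE : ∀ i, MeasurableSet (E i))
    (hTApos : 0 < ℙ (T ∩ A))
    (hsub : ∀ i, A ⊆ E i)
    (hpair : ∀ i j, i ≠ j → ℙ (T ∩ (E i ∩ E j)) = ℙ (T ∩ A)) :
    0 ≤ -logb 2 (ℙ (T ∩ A)).toReal +
      ∑ B ∈ (Finset.univ : Finset (Fin k)).powerset.filter Finset.Nonempty,
        (-1 : ℝ) ^ (B.card - 1) * logb 2 (ℙ (T ∩ ⋃ i ∈ B, E i)).toReal := by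
  set a := (ℙ (T ∩ A)).toReal
  set q : Fin k → ℝ := fun i => (ℙ ((T ∩ E i) \ (T ∩ A))).toReal
  have hTA : MeasurableSet (T ∩ A) := hT.inter hA
  have hunion : ∀ B ∈ (Finset.univ : Finset (Fin k)).powerset.filter Finset.Nonempty,
      (ℙ (T ∩ ⋃ i ∈ B, E i)).toReal = a + ∑ i ∈ B, q i := by
    intro B hB
    obtain ⟨i₀, hi₀⟩ := (mem_filter.1 hB).2
    rw [Set.inter_iUnion₂, measure_biUnion_eq_add_sum_sdiff hi₀
        (Set.inter_subset_inter_right T (hsub i₀))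
        (fun i _ => ((hT.inter (hE i)).diff hTA).nullMeasurableSet)
        (fun i _ j _ hij => aedisjoint_sdiff_of_measure_inter_eq_s10 hTA.nullMeasurableSet
          (measure_ne_top _ _) (fun x hx => ⟨⟨hx.1, hsub i hx.2⟩, hx.1, hsub j hx.2⟩)
          (by rw [← Set.inter_inter_distrib_left]; exact hpair i j hij)),
      ENNReal.toReal_add (measure_ne_top _ _) (ENNReal.sum_ne_top.2 fun _ _ => measure_ne_top _ _),
      ENNReal.toReal_sum fun _ _ => measure_ne_top _ _]
  rw [sum_congr rfl fun B hB => by rw [hunion B hB], ← neg_neg (_ + _),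
    ← altShiftSum_eq_neg_sum_nonempty, neg_nonneg]
  exact altShiftSum_logb_nonpos one_lt_two (fun i _ => ENNReal.toReal_nonneg)
    (ENNReal.toReal_pos hTApos.ne' (measure_ne_top _ _)) measureReal_le_one
end

section
/- Let d ≥ 0 and δ ≥ 0 be real numbers. Then the function x ↦ log(1 + d/x) − log(1 + d/(x + δ)) is convex on the open interval (0, ∞). -/
/-!
Since `log (1 + d / x) = log (x + d) - log x` has second derivative `x⁻² - (x + d)⁻²`, the second
derivative of `x ↦ log (1 + d / x) - log (1 + d / (x + δ))` is the mixed second difference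
`φ x - φ (x + d) - φ (x + δ) + φ (x + δ + d)` of `φ t = t⁻²`. For a convex `φ` and `d, δ ≥ 0`
such a difference is nonnegative, because `x + d` and `x + δ` are convex combinations of `x` and
`x + δ + d` with swapped weights.
-/

open Real Set

theorem ConvexOn.map_add_add_map_add_le {𝕜 β : Type*} [Field 𝕜] [LinearOrder 𝕜]
    [IsStrictOrderedRing 𝕜] [AddCommMonoid β] [PartialOrder β] [IsOrderedAddMonoid β]
    [Module 𝕜 β] {s : Set 𝕜} {f : 𝕜 → β} (hf : ConvexOn 𝕜 s f) {x a b : 𝕜} (hx : x ∈ s)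
    (hy : x + a + b ∈ s) (ha : 0 ≤ a) (hb : 0 ≤ b) :
    f (x + a) + f (x + b) ≤ f x + f (x + a + b) := by
  rcases (add_nonneg ha hb).eq_or_lt with hab | hab
  · obtain ⟨rfl, rfl⟩ := (add_eq_zero_iff_of_nonneg ha hb).1 hab.symm
    simp
  set μ := a / (a + b)
  set ν := b / (a + b)
  have hμν : μ + ν = 1 := by simp only [μ, ν]; field_simp
  have hνμ : ν + μ = 1 := by rw [add_comm, hμν]
  have hxa := hf.2 hx hy (div_nonneg hb hab.le) (div_nonneg ha hab.le) hνμ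
  have hxb := hf.2 hx hy (div_nonneg ha hab.le) (div_nonneg hb hab.le) hμν
  rw [show ν • x + μ • (x + a + b) = x + a by
    simp only [μ, ν, smul_eq_mul]; field_simp; ring] at hxa
  rw [show μ • x + ν • (x + a + b) = x + b by
    simp only [μ, ν, smul_eq_mul]; field_simp; ring] at hxb
  calc f (x + a) + f (x + b)
      ≤ (ν • f x + μ • f (x + a + b)) + (μ • f x + ν • f (x + a + b)) := add_le_add hxa hxb
    _ = f x + f (x + a + b) := by
      rw [add_add_add_comm, ← add_smul, ← add_smul, hνμ, hμν, one_smul, one_smul]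

theorem convexOn_inv_sq : ConvexOn ℝ (Ioi 0) fun x : ℝ => (x ^ 2)⁻¹ := by
  simpa only [zpow_neg, zpow_ofNat] using convexOn_zpow (𝕜 := ℝ) (-2)

theorem Real.log_one_add_div {x c : ℝ} (hx : x ≠ 0) (hxc : x + c ≠ 0) :
    log (1 + c / x) = log (x + c) - log x := by
  rw [← log_div hxc hx, add_div, div_self hx, add_comm]

theorem hasDerivAt_log_one_add_div {x c : ℝ} (hx : x ≠ 0) (hxc : x + c ≠ 0) :
    HasDerivAt (fun y => log (1 + c / y)) ((x + c)⁻¹ - x⁻¹) x := by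
  have hlog : HasDerivAt (fun y => log (y + c) - log y) ((x + c)⁻¹ - x⁻¹) x :=
    ((hasDerivAt_log hxc).comp_add_const x c).sub (hasDerivAt_log hx)
  refine hlog.congr_of_eventuallyEq ?_
  filter_upwards [eventually_ne_nhds hx, eventually_ne_nhds (hxc ∘ eq_neg_iff_add_eq_zero.1)]
    with y hy hyc
  exact log_one_add_div hy (hyc ∘ eq_neg_of_add_eq_zero_left)

theorem hasDerivAt_inv_add_sub_inv {x c : ℝ} (hx : x ≠ 0) (hxc : x + c ≠ 0) :
    HasDerivAt (fun y => (y + c)⁻¹ - y⁻¹) ((x ^ 2)⁻¹ - ((x + c) ^ 2)⁻¹) x :=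
  (((hasDerivAt_inv hxc).comp_add_const x c).sub (hasDerivAt_inv hx)).congr_deriv (by ring)

theorem hasDerivAt_sub_comp_add_const {f f' : ℝ → ℝ} {s : Set ℝ} {δ : ℝ}
    (hf : ∀ x ∈ s, HasDerivAt f (f' x) x) (hs : ∀ x ∈ s, x + δ ∈ s) :
    ∀ x ∈ s, HasDerivAt (fun x => f x - f (x + δ)) (f' x - f' (x + δ)) x := fun x hx =>
  (hf x hx).sub ((hf (x + δ) (hs x hx)).comp_add_const x δ)

theorem convexity_of_log_increment_difference
    (d δ : ℝ) (hd : 0 ≤ d) (hδ : 0 ≤ δ) :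
    ConvexOn ℝ (Set.Ioi (0 : ℝ))
      (fun x => Real.log (1 + d / x) - Real.log (1 + d / (x + δ))) := by
  have hshift : ∀ c, 0 ≤ c → ∀ x ∈ Ioi (0 : ℝ), x + c ∈ Ioi 0 := fun c hc x hx =>
    add_pos_of_pos_of_nonneg hx hc
  have hf' := hasDerivAt_sub_comp_add_const (fun x hx =>
    hasDerivAt_log_one_add_div (ne_of_gt hx) (ne_of_gt (hshift d hd x hx))) (hshift δ hδ)
  have hf'' := hasDerivAt_sub_comp_add_const (fun x hx =>
    hasDerivAt_inv_add_sub_inv (ne_of_gt hx) (ne_of_gt (hshift d hd x hx))) (hshift δ hδ)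
  refine convexOn_of_hasDerivWithinAt2_nonneg (convex_Ioi 0)
    (fun x hx => (hf' x hx).continuousAt.continuousWithinAt)
    (fun x hx => (hf' x (interior_subset hx)).hasDerivWithinAt)
    (fun x hx => (hf'' x (interior_subset hx)).hasDerivWithinAt) (fun x hx => ?_)
  replace hx : x ∈ Ioi 0 := interior_subset hx
  have hmixed := convexOn_inv_sq.map_add_add_map_add_le hx (hshift d hd _ (hshift δ hδ x hx)) hδ hd
  linarith
end

section
/- Let d ≥ 0 and δ ≥ 0 be real numbers and let 0 < x ≤ y. Then log(1 + d/x) − log(1 + d/(x + δ)) ≥ log(1 + d/y) − log(1 + d/(y + δ)); i.e., the function x ↦ log(1 + d/x) − log(1 + d/(x + δ)) is nonincreasing on (0, ∞). -/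
open Real

/-! The increment `log (1 + d/x) - log (1 + d/(x + δ))` equals `log (1 + dδ / (x (x + d + δ)))`,
and `x (x + d + δ)` increases with `x`. -/

theorem one_add_div_div_one_add_div {d δ x : ℝ} (hx : x ≠ 0) (hxδ : x + δ ≠ 0)
    (hxdδ : x + d + δ ≠ 0) :
    (1 + d / x) / (1 + d / (x + δ)) = 1 + d * δ / (x * (x + d + δ)) := by
  have hxδd : x + δ + d ≠ 0 := by rwa [add_right_comm]
  field_simp
  ring

theorem log_one_add_div_sub_log_one_add_div {d δ x : ℝ} (hd : 0 ≤ d) (hδ : 0 ≤ δ) (hx : 0 < x) :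
    log (1 + d / x) - log (1 + d / (x + δ)) = log (1 + d * δ / (x * (x + d + δ))) := by
  rw [← log_div (by positivity) (by positivity),
    one_add_div_div_one_add_div hx.ne' (by positivity) (by positivity)]

theorem log_increment_difference_antitone
    (d δ : ℝ) (hd : 0 ≤ d) (hδ : 0 ≤ δ)
    (x y : ℝ) (hx : 0 < x) (hxy : x ≤ y) :
    Real.log (1 + d / y) - Real.log (1 + d / (y + δ))
      ≤ Real.log (1 + d / x) - Real.log (1 + d / (x + δ)) := by
  have hy : 0 < y := hx.trans_le hxy
  rw [log_one_add_div_sub_log_one_add_div hd hδ hx, log_one_add_div_sub_log_one_add_div hd hδ hy]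
  gcongr
end

section
/- Let k ≥ 1, p > 0, and d₁, …, d_k ≥ 0. Then Σ_{B ⊆ {1,…,k}} (−1)^{|B|} log₂( p + Σ_{i∈B} d_i ) = − Σ_{B ⊆ {2,…,k}} (−1)^{|B|} log₂( (p + d₁ + Σ_{i∈B} d_i) / (p + Σ_{i∈B} d_i) ). Hence the partial information atom π₊ˢˣ(α) admits the closed form π₊ˢˣ(α) = Σ_{B ⊆ α⁻∖{γ₁}} (−1)^{|B|} log₂( (ℙ(⋀B) + d₁) / ℙ(⋀B) ), where ℙ(⋀B) = p + Σ_{γᵢ∈B} dᵢ. -/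
open Real

theorem Finset.sum_powerset_insert_neg_one_pow_mul {α R : Type*} [DecidableEq α] [CommRing R]
    {s : Finset α} {a : α} (ha : a ∉ s) (f : Finset α → R) :
    ∑ B ∈ (insert a s).powerset, (-1 : R) ^ B.card * f B
      = -∑ B ∈ s.powerset, (-1 : R) ^ B.card * (f (insert a B) - f B) := by
  rw [Finset.sum_powerset_insert ha, ← Finset.sum_add_distrib, ← Finset.sum_neg_distrib]
  refine Finset.sum_congr rfl fun B hB => ?_
  have haB : a ∉ B := fun h => ha (Finset.mem_powerset.mp hB h)
  rw [Finset.card_insert_of_notMem haB, pow_succ]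
  ring

theorem atom_closed_form
    (k : ℕ) (hk : 1 ≤ k) (p : ℝ) (hp : 0 < p)
    (d : Fin k → ℝ) (hd : ∀ i, 0 ≤ d i) :
    ∑ B : Finset (Fin k), (-1 : ℝ) ^ B.card * logb 2 (p + ∑ i ∈ B, d i)
      = -∑ B ∈ (Finset.univ.erase (⟨0, hk⟩ : Fin k)).powerset,
          (-1 : ℝ) ^ B.card *
            logb 2 ((p + d ⟨0, hk⟩ + ∑ i ∈ B, d i) / (p + ∑ i ∈ B, d i)) := by
  set i₀ : Fin k := ⟨0, hk⟩
  set s := Finset.univ.erase i₀ with hs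
  have hi₀ : i₀ ∉ s := Finset.notMem_erase _ _
  rw [← Finset.powerset_univ, ← Finset.insert_erase (Finset.mem_univ i₀), ← hs,
    Finset.sum_powerset_insert_neg_one_pow_mul hi₀]
  refine congrArg Neg.neg (Finset.sum_congr rfl fun B hB => ?_)
  have hi₀B : i₀ ∉ B := fun h => hi₀ (Finset.mem_powerset.mp hB h)
  have hB : 0 ≤ ∑ i ∈ B, d i := Finset.sum_nonneg fun i _ => hd i
  have hpos : 0 < p + ∑ i ∈ B, d i := by linarith
  have hpos' : 0 < p + d i₀ + ∑ i ∈ B, d i := by linarith [hd i₀]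
  rw [Finset.sum_insert hi₀B, ← add_assoc, logb_div hpos'.ne' hpos.ne']
end
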